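/- Let d ≥ 2 and let V : ℝ^d → ℝ be C^∞ satisfying: (i) V(−x) = V(x) for all x; (ii) there is an orthogonal d×d matrix M such that V(M S_θ M⁻¹ x) = V(x) for all x ∈ ℝ^d and all θ ∈ ℝ, where S_θ is the rotation by angle θ in the first two coordinates (block-diagonal matrix with the 2×2 rotation by θ and the (d−2)×(d−2) identity). Let L₀ be the plane spanned by M e₁ and M e₂, let x₀ ∈ L₀ and c ≥ 0 be such that ∇V(x₀) = c·x₀. Then the curve x^t = M S_{√c·t} M⁻¹ x₀, ξ^t = √c · M S_{√c·t + π/2} M⁻¹ x₀ satisfies the Hamilton equations (d/dt)x^t = ξ^t and (d/dt)ξ^t = −∇V(x^t) for all t ∈ ℝ, with initial data x⁰ = x₀ and ξ⁰ = √c·M S_{π/2} M⁻¹ x₀; moreover |x^t| = |x₀| for all t ∈ ℝ. -/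

import Mathlib

/-!
The maps `A_θ = M S_θ M⁻¹` are linear isometries preserving `V`, so `∇V (A_θ x) = A_θ (∇V x)`, and
along the orbit of `x₀` the gradient equals `c` times the position. On the plane spanned by
`e₁, e₂` one has `S_θ = cos θ + sin θ • S_{π/2}` with `S_{π/2}² = -1`, so differentiating
`θ ↦ S_θ y` adds `π/2` to the angle and differentiating twice negates. At angular speed `√c` the
acceleration of the orbit is therefore `-c xᵗ = -∇V (xᵗ)`.
-/

noncomputable section

/-- The rotation by angle `θ` in the first two coordinates of `ℝ^d` (identity on the other
coordinates). -/
def Srot (d : ℕ) (hd : 2 ≤ d) (θ : ℝ) (x : EuclideanSpace ℝ (Fin d)) :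
    EuclideanSpace ℝ (Fin d) :=
  WithLp.toLp 2 fun i : Fin d =>
    if (i : ℕ) = 0 then
      Real.cos θ * x ⟨0, by omega⟩ + Real.sin θ * x ⟨1, by omega⟩
    else if (i : ℕ) = 1 then
      -Real.sin θ * x ⟨0, by omega⟩ + Real.cos θ * x ⟨1, by omega⟩
    else x i

open Real InnerProductSpace

section Gradient

variable {𝕜 E : Type*} [RCLike 𝕜] [NormedAddCommGroup E] [InnerProductSpace 𝕜 E] [CompleteSpace E]

theorem gradient_comp_linearIsometryEquiv (f : E → 𝕜) (A : E ≃ₗᵢ[𝕜] E) (x : E) :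
    gradient (f ∘ A) x = A.symm (gradient f (A x)) := by
  apply (toDual 𝕜 E).injective
  ext v
  rw [gradient, LinearIsometryEquiv.apply_symm_apply, toDual_apply_apply,
    ← A.inner_map_map, A.apply_symm_apply, ← toDual_apply_apply, gradient,
    LinearIsometryEquiv.apply_symm_apply]
  exact congrArg (· v) (A.toContinuousLinearEquiv.comp_right_fderiv (f := f) (x := x))

theorem gradient_apply_of_comp_eq (f : E → 𝕜) {A : E ≃ₗᵢ[𝕜] E} (hA : f ∘ A = f) (x : E) :
    gradient f (A x) = A (gradient f x) := by
  conv_rhs => rw [← hA, gradient_comp_linearIsometryEquiv, A.apply_symm_apply]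

end Gradient

section Rotation

variable {d : ℕ} (hd : 2 ≤ d)

theorem srot_srot (θ φ : ℝ) (x : EuclideanSpace ℝ (Fin d)) :
    Srot d hd θ (Srot d hd φ x) = Srot d hd (θ + φ) x := by
  ext i
  simp only [Srot, PiLp.toLp_apply, if_true, one_ne_zero, if_false, cos_add, sin_add]
  split_ifs <;> ring

theorem srot_zero (x : EuclideanSpace ℝ (Fin d)) : Srot d hd 0 x = x := by
  ext i
  simp only [Srot, PiLp.toLp_apply, cos_zero, sin_zero]
  split_ifs with h0 h1
  · simp [show (⟨0, by omega⟩ : Fin d) = i from Fin.ext h0.symm]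
  · simp [show (⟨1, by omega⟩ : Fin d) = i from Fin.ext h1.symm]
  · rfl

theorem norm_srot (θ : ℝ) (x : EuclideanSpace ℝ (Fin d)) : ‖Srot d hd θ x‖ = ‖x‖ := by
  let i₀ : Fin d := ⟨0, by omega⟩
  let i₁ : Fin d := ⟨1, by omega⟩
  have h01 : i₀ ≠ i₁ := by simp [i₀, i₁, Fin.ext_iff]
  have hpair : ‖Srot d hd θ x i₀‖ ^ 2 + ‖Srot d hd θ x i₁‖ ^ 2 = ‖x i₀‖ ^ 2 + ‖x i₁‖ ^ 2 := by
    simp only [Srot, PiLp.toLp_apply, i₀, i₁, if_true, one_ne_zero, if_false, Real.norm_eq_abs,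
      sq_abs]
    linear_combination (x i₀ ^ 2 + x i₁ ^ 2) * sin_sq_add_cos_sq θ
  have hrest : ∀ i ∈ Finset.univ \ {i₀, i₁}, ‖Srot d hd θ x i‖ ^ 2 = ‖x i‖ ^ 2 := by
    intro i hi
    simp only [Finset.mem_sdiff, Finset.mem_insert, Finset.mem_singleton, i₀, i₁, Fin.ext_iff,
      not_or] at hi
    simp [Srot, hi.2.1, hi.2.2]
  rw [EuclideanSpace.norm_eq, EuclideanSpace.norm_eq,
    ← Finset.sum_sdiff (Finset.subset_univ {i₀, i₁}),
    ← Finset.sum_sdiff (Finset.subset_univ {i₀, i₁}), Finset.sum_pair h01, Finset.sum_pair h01,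
    hpair, Finset.sum_congr rfl hrest]

def srotEquiv (θ : ℝ) : EuclideanSpace ℝ (Fin d) ≃ₗᵢ[ℝ] EuclideanSpace ℝ (Fin d) where
  toFun := Srot d hd θ
  invFun := Srot d hd (-θ)
  map_add' x y := by
    ext i
    simp only [Srot, PiLp.toLp_apply, PiLp.add_apply]
    split_ifs <;> ring
  map_smul' r x := by
    ext i
    simp only [Srot, PiLp.toLp_apply, PiLp.smul_apply, smul_eq_mul, RingHom.id_apply]
    split_ifs <;> ring
  left_inv x := by simp only [srot_srot, neg_add_cancel, srot_zero]
  right_inv x := by simp only [srot_srot, add_neg_cancel, srot_zero]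
  norm_map' := norm_srot hd θ

@[simp]
theorem srotEquiv_apply (θ : ℝ) (x : EuclideanSpace ℝ (Fin d)) :
    srotEquiv hd θ x = Srot d hd θ x :=
  rfl

variable (d) in
def rotationPlane : Submodule ℝ (EuclideanSpace ℝ (Fin d)) :=
  Submodule.span ℝ {EuclideanSpace.single ⟨0, by omega⟩ 1, EuclideanSpace.single ⟨1, by omega⟩ 1}

variable {hd} {y : EuclideanSpace ℝ (Fin d)}

theorem srot_eq_cos_smul_add_sin_smul (hy : y ∈ rotationPlane d hd) (θ : ℝ) :
    Srot d hd θ y = cos θ • y + sin θ • Srot d hd (π / 2) y := by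
  obtain ⟨a, b, rfl⟩ := Submodule.mem_span_pair.mp hy
  ext i
  simp only [Srot, PiLp.toLp_apply, PiLp.add_apply, PiLp.smul_apply, smul_eq_mul,
    PiLp.single_apply, Fin.ext_iff, cos_pi_div_two, sin_pi_div_two]
  split_ifs <;> simp_all [add_comm]

theorem srot_add_pi (hy : y ∈ rotationPlane d hd) (θ : ℝ) :
    Srot d hd (θ + π) y = -Srot d hd θ y := by
  rw [srot_eq_cos_smul_add_sin_smul hy (θ + π), srot_eq_cos_smul_add_sin_smul hy θ, cos_add_pi,
    sin_add_pi, neg_smul, neg_smul, neg_add]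

theorem hasDerivAt_srot (hy : y ∈ rotationPlane d hd) (θ : ℝ) :
    HasDerivAt (fun φ => Srot d hd φ y) (Srot d hd (θ + π / 2) y) θ := by
  rw [funext (srot_eq_cos_smul_add_sin_smul hy), srot_eq_cos_smul_add_sin_smul hy (θ + π / 2),
    cos_add_pi_div_two, sin_add_pi_div_two]
  exact ((hasDerivAt_cos θ).smul_const y).add ((hasDerivAt_sin θ).smul_const _)

theorem hasDerivAt_srot_mul_add (hy : y ∈ rotationPlane d hd) (r φ t : ℝ) :
    HasDerivAt (fun s => Srot d hd (r * s + φ) y) (r • Srot d hd (r * t + φ + π / 2) y) t := by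
  have hlin : HasDerivAt (fun s => r * s + φ) r t := by
    simpa using ((hasDerivAt_id t).const_mul r).add_const φ
  exact (hasDerivAt_srot hy _).scomp t hlin

end Rotation

/-- Periodic circular orbits: for an even potential `V` invariant under the rotations
`M S_θ M⁻¹`, if `x₀` lies in the invariant plane `L₀ = span(M e₁, M e₂)` and
`∇V(x₀) = c x₀` with `c ≥ 0`, then `xᵗ = M S_{√c t} M⁻¹ x₀`,
`ξᵗ = √c · M S_{√c t + π/2} M⁻¹ x₀` solves the Hamilton equations with initial data
`(x₀, √c · M S_{π/2} M⁻¹ x₀)`, and `|xᵗ| = |x₀|` for all `t`. -/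
theorem stmt_12 (d : ℕ) (hd : 2 ≤ d)
    (V : EuclideanSpace ℝ (Fin d) → ℝ)
    (M : EuclideanSpace ℝ (Fin d) ≃ₗᵢ[ℝ] EuclideanSpace ℝ (Fin d))
    (hMV : ∀ (x : EuclideanSpace ℝ (Fin d)) (θ : ℝ), V (M (Srot d hd θ (M.symm x))) = V x)
    (x₀ : EuclideanSpace ℝ (Fin d))
    (hx₀ : x₀ ∈ Submodule.span ℝ
        {M (EuclideanSpace.single (⟨0, by omega⟩ : Fin d) (1 : ℝ)),
         M (EuclideanSpace.single (⟨1, by omega⟩ : Fin d) (1 : ℝ))})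
    (c : ℝ) (hc : 0 ≤ c) (hgrad : gradient V x₀ = c • x₀) :
    (∀ t : ℝ,
      HasDerivAt (fun s : ℝ => M (Srot d hd (Real.sqrt c * s) (M.symm x₀)))
        (Real.sqrt c • M (Srot d hd (Real.sqrt c * t + Real.pi / 2) (M.symm x₀))) t ∧
      HasDerivAt (fun s : ℝ => Real.sqrt c • M (Srot d hd (Real.sqrt c * s + Real.pi / 2) (M.symm x₀)))
        (-gradient V (M (Srot d hd (Real.sqrt c * t) (M.symm x₀)))) t ∧
      ‖M (Srot d hd (Real.sqrt c * t) (M.symm x₀))‖ = ‖x₀‖) ∧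
    M (Srot d hd (Real.sqrt c * 0) (M.symm x₀)) = x₀ ∧
    Real.sqrt c • M (Srot d hd (Real.sqrt c * 0 + Real.pi / 2) (M.symm x₀)) =
      Real.sqrt c • M (Srot d hd (Real.pi / 2) (M.symm x₀)) := by
  have hy : M.symm x₀ ∈ rotationPlane d hd := by
    obtain ⟨a, b, rfl⟩ := Submodule.mem_span_pair.mp hx₀
    exact Submodule.mem_span_pair.mpr ⟨a, b, by simp⟩
  have orbit_deriv (φ t : ℝ) : HasDerivAt (fun s => M (Srot d hd (√c * s + φ) (M.symm x₀)))
      (√c • M (Srot d hd (√c * t + φ + π / 2) (M.symm x₀))) t := by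
    simpa [Function.comp_def] using M.toContinuousLinearEquiv.hasFDerivAt.comp_hasDerivAt t
      (hasDerivAt_srot_mul_add hy √c φ t)
  have gradient_orbit (θ : ℝ) : gradient V (M (Srot d hd θ (M.symm x₀))) =
      c • M (Srot d hd θ (M.symm x₀)) := by
    have hinv : V ∘ (M.symm.trans ((srotEquiv hd θ).trans M)) = V := funext fun x => hMV x θ
    simpa [hgrad] using gradient_apply_of_comp_eq V hinv x₀
  refine ⟨fun t => ⟨by simpa using orbit_deriv 0 t, ?_, by simp [norm_srot]⟩, by simp [srot_zero],
    by simp⟩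
  refine ((orbit_deriv (π / 2) t).const_smul √c).congr_deriv ?_
  rw [gradient_orbit, add_assoc, add_halves, srot_add_pi hy]
  simp only [map_neg, smul_neg, smul_smul, Real.mul_self_sqrt hc]

end
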